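/- Let q ≥ 2 be an integer and let n be a positive even integer. Let G be the cyclic group Multiplicative (ZMod n), and let ρ be the ℤ-linear representation of G on ZMod (q^n − 1) under which Multiplicative.ofAdd j acts by multiplication by (−q)^(j.val). Then the zeroth group cohomology H^0(G; ρ) (the invariants of ρ) and the zeroth group homology H_0(G; ρ) (the coinvariants of ρ) are both isomorphic as abelian groups to ZMod (q + 1); explicitly, the invariants form the cyclic subgroup of ZMod (q^n − 1) generated by the image of the integer (q^n − 1)/(−q − 1). -/

import Mathlib

/-!
The generator `ofAdd 1` acts on `ZMod (q ^ n - 1)` by multiplication by `-q`, so the invariants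
are the `(q + 1)`-torsion and the coinvariants are the quotient by `(q + 1)`. As `n` is even,
`q + 1 = q - (-1)` divides `q ^ n - (-1) ^ n = q ^ n - 1`, and in the cyclic group `ZMod (K * m)`
both the `K`-torsion, which is generated by `m`, and the quotient by `K` are cyclic of order `K`.
-/

open Multiplicative

theorem Nat.succ_dvd_pow_sub_one_of_even (q : ℕ) {n : ℕ} (hn : Even n) : q + 1 ∣ q ^ n - 1 := by
  obtain ⟨k, rfl⟩ := hn
  rw [← two_mul, pow_mul]
  have h : q + 1 ∣ q ^ 2 - 1 := ⟨q - 1, by rw [← one_pow 2, Nat.sq_sub_sq, one_pow]⟩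
  simpa only [one_pow] using h.trans (Nat.sub_dvd_pow_sub_pow _ 1 k)

theorem Int.pow_sub_one_ediv_neg_sub_one {q n m : ℕ} (hq : 1 ≤ q) (hm : q ^ n - 1 = (q + 1) * m) :
    ((q : ℤ) ^ n - 1) / (-(q : ℤ) - 1) = -m := by
  have h : (q : ℤ) ^ n - 1 = (q + 1) * m := by
    rw [← Nat.cast_pow, ← Nat.cast_one, ← Nat.cast_sub (Nat.one_le_pow _ _ hq), hm]
    push_cast; ring
  rw [h, show -(q : ℤ) - 1 = -(q + 1) by ring, Int.ediv_neg, Int.mul_ediv_cancel_left _ (by omega)]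

namespace ZMod

theorem mem_zpowers_ofAdd_one {n : ℕ} (g : Multiplicative (ZMod n)) :
    g ∈ Subgroup.zpowers (ofAdd 1) := by
  obtain ⟨k, hk⟩ := intCast_surjective (toAdd g)
  exact ⟨k, show ofAdd 1 ^ k = g by rw [← ofAdd_zsmul, zsmul_one, hk, ofAdd_toAdd]⟩

variable {K m N : ℕ}

theorem natCast_mul_eq_zero_iff_mem_zmultiples (hK : K ≠ 0) (h : K * m = N) (x : ZMod N) :
    (K : ZMod N) * x = 0 ↔ x ∈ AddSubgroup.zmultiples (m : ZMod N) := by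
  constructor
  · obtain ⟨t, rfl⟩ := intCast_surjective x
    intro hx
    have hdvd : ((K * m : ℕ) : ℤ) ∣ K * t := by
      rw [h, ← intCast_zmod_eq_zero_iff_dvd]
      exact_mod_cast hx
    push_cast at hdvd
    obtain ⟨s, rfl⟩ := (mul_dvd_mul_iff_left (by exact_mod_cast hK)).mp hdvd
    exact ⟨s, by push_cast [zsmul_eq_mul]; ring⟩
  · rintro ⟨k, rfl⟩
    dsimp only
    rw [zsmul_eq_mul, mul_left_comm, ← Nat.cast_mul, h, natCast_self, mul_zero]

theorem addOrderOf_natCast_of_mul_eq (hm : m ≠ 0) (h : K * m = N) :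
    addOrderOf (m : ZMod N) = K := by
  rw [addOrderOf_coe' N hm, Nat.gcd_eq_right ⟨K, by rw [← h, mul_comm]⟩, ← h,
    Nat.mul_div_cancel _ (Nat.pos_of_ne_zero hm)]

noncomputable def zmultiplesNatCastAddEquiv (hm : m ≠ 0) (h : K * m = N) :
    AddSubgroup.zmultiples (m : ZMod N) ≃+ ZMod K :=
  (zmodAddCyclicAddEquiv inferInstance).symm.trans
    (ringEquivCongr (by rw [Nat.card_zmultiples, addOrderOf_natCast_of_mul_eq hm h])).toAddEquiv

theorem ker_castHom (h : K ∣ N) :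
    RingHom.ker (castHom h (ZMod K)) = Ideal.span {(K : ZMod N)} := by
  ext x
  rw [RingHom.mem_ker, Ideal.mem_span_singleton']
  constructor
  · obtain ⟨t, rfl⟩ := intCast_surjective x
    rw [map_intCast, intCast_zmod_eq_zero_iff_dvd]
    rintro ⟨s, rfl⟩
    exact ⟨s, by push_cast; ring⟩
  · rintro ⟨y, rfl⟩
    rw [map_mul, map_natCast, natCast_self, mul_zero]

noncomputable def quotientSpanNatCastAddEquiv (h : K ∣ N) :
    (ZMod N ⧸ (Ideal.span {(K : ZMod N)}).restrictScalars ℤ) ≃+ ZMod K :=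
  let c := (castHom h (ZMod K)).toIntAlgHom.toLinearMap
  ((Submodule.quotEquivOfEq _ (LinearMap.ker c) (by rw [← ker_castHom h]; rfl)).trans
    (c.quotKerEquivOfSurjective (castHom_surjective h))).toAddEquiv

end ZMod

namespace Representation

variable {A : Type*} [CommRing A] {n : ℕ} [Fact (1 < n)]
  (ρ : Representation ℤ (Multiplicative (ZMod n)) A) {a : A}

theorem mem_invariants_iff_one_sub_mul_eq_zero
    (hρ : ∀ (j : ZMod n) (x : A), ρ (ofAdd j) x = a ^ j.val * x) (x : A) :
    x ∈ ρ.invariants ↔ (1 - a) * x = 0 := by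
  rw [mem_invariants_iff_of_forall_mem_zpowers ρ _ ZMod.mem_zpowers_ofAdd_one, hρ, ZMod.val_one,
    pow_one, sub_mul, one_mul, sub_eq_zero, eq_comm]

theorem span_range_sub_apply_eq_span_one_sub
    (hρ : ∀ (j : ZMod n) (x : A), ρ (ofAdd j) x = a ^ j.val * x) :
    Submodule.span ℤ (Set.range fun p : Multiplicative (ZMod n) × A => p.2 - ρ p.1 p.2) =
      (Ideal.span {1 - a}).restrictScalars ℤ := by
  apply le_antisymm
  · rw [Submodule.span_le]
    rintro _ ⟨⟨g, x⟩, rfl⟩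
    rw [← ofAdd_toAdd g]
    simp only [hρ, SetLike.mem_coe, Submodule.restrictScalars_mem, Ideal.mem_span_singleton]
    exact (one_sub_dvd_one_sub_pow a _).trans ⟨x, by ring⟩
  · intro x hx
    obtain ⟨y, rfl⟩ := Ideal.mem_span_singleton'.mp hx
    refine Submodule.subset_span ⟨(ofAdd 1, y), ?_⟩
    simp only [hρ, ZMod.val_one, pow_one]
    ring

end Representation

/-- Let `q ≥ 2`, `n > 0` even, `G = Multiplicative (ZMod n)`, and let
`ρ` be the ℤ-linear representation of `G` on `ZMod (q^n - 1)` where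
`Multiplicative.ofAdd j` acts by multiplication by `(-q) ^ j.val`.  Then the invariants
of `ρ` (i.e. `H^0(G; ρ)`) and the coinvariants of `ρ` (i.e. `H_0(G; ρ)`) are both
isomorphic, as abelian groups, to `ZMod (q + 1)`; explicitly, the invariants form the
cyclic subgroup of `ZMod (q^n - 1)` generated by the image of the integer
`(q^n - 1)/(-q - 1)`. -/
theorem stmt_11 (n q : ℕ) (hn : 0 < n) (hne : Even n) (hq : 2 ≤ q)
    (ρ : Representation ℤ (Multiplicative (ZMod n)) (ZMod (q ^ n - 1)))
    (hρ : ∀ (j : ZMod n) (x : ZMod (q ^ n - 1)),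
      ρ (Multiplicative.ofAdd j) x = (((-q : ℤ) ^ j.val : ℤ) : ZMod (q ^ n - 1)) * x) :
    Nonempty (ρ.invariants ≃+ ZMod (q + 1)) ∧
    Nonempty ((ZMod (q ^ n - 1) ⧸
        Submodule.span ℤ (Set.range
          fun p : Multiplicative (ZMod n) × ZMod (q ^ n - 1) => p.2 - ρ p.1 p.2)) ≃+
      ZMod (q + 1)) ∧
    (ρ.invariants : Set (ZMod (q ^ n - 1)))
      = (AddSubgroup.zmultiples
          (((((q : ℤ) ^ n - 1) / (-(q : ℤ) - 1) : ℤ)) : ZMod (q ^ n - 1)) :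
            Set (ZMod (q ^ n - 1))) := by
  have : Fact (1 < n) := ⟨by obtain ⟨k, rfl⟩ := hne; omega⟩
  obtain ⟨m, hm⟩ := Nat.succ_dvd_pow_sub_one_of_even q hne
  have hm0 : m ≠ 0 := by
    rintro rfl
    have := Nat.one_lt_pow hn.ne' (by omega : 1 < q)
    omega
  have hρ' : ∀ (j : ZMod n) (x : ZMod (q ^ n - 1)),
      ρ (ofAdd j) x = ((-q : ℤ) : ZMod (q ^ n - 1)) ^ j.val * x := by
    simpa only [Int.cast_pow] using hρ
  have h1a : 1 - ((-q : ℤ) : ZMod (q ^ n - 1)) = ((q + 1 : ℕ) : ZMod (q ^ n - 1)) := by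
    push_cast; ring
  have hinv : ρ.invariants.toAddSubgroup = AddSubgroup.zmultiples (m : ZMod (q ^ n - 1)) := by
    ext x
    rw [Submodule.mem_toAddSubgroup, ρ.mem_invariants_iff_one_sub_mul_eq_zero hρ', h1a,
      ZMod.natCast_mul_eq_zero_iff_mem_zmultiples (by omega) hm.symm]
  refine ⟨⟨(AddEquiv.addSubgroupCongr hinv).trans (ZMod.zmultiplesNatCastAddEquiv hm0 hm.symm)⟩,
    ⟨?_⟩, ?_⟩
  · rw [ρ.span_range_sub_apply_eq_span_one_sub hρ', h1a]
    exact ZMod.quotientSpanNatCastAddEquiv ⟨m, hm⟩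
  · rw [Int.pow_sub_one_ediv_neg_sub_one (by omega) hm, Int.cast_neg, Int.cast_natCast,
      AddSubgroup.zmultiples_neg, ← hinv]
    rfl
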